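/- arXiv:2406.09083 — 4 statements merged into one kernel-verified Lean document; each statement's English description precedes it below -/
import Mathlib

section
/- Let b, c, d be nonnegative integers with b = c + d > 0. Then the Octopus position [2^b | 1^c, 2^d] with finger count 2 (Left's hands all show 2 fingers) is an N-position: whichever player moves first has a winning strategy. -/
namespace Octopus

/-- An Octopus position: the multiset of Left's hand values and the
multiset of Right's hand values. -/
abbrev Pos : Type := Multiset ℕ × Multiset ℕ

/-- All hand values lie in `{1, ..., n}`, where `n` is the finger count. -/
def Valid (n : ℕ) (P : Pos) : Prop :=
  (∀ x ∈ P.1, 1 ≤ x ∧ x ≤ n) ∧ (∀ y ∈ P.2, 1 ≤ y ∧ y ≤ n)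

/-- A move of Left with finger count `n`: Left chooses an attacking hand `x` in
her multiset and a target hand `y` in Right's multiset; that copy of `y` is
replaced by `x + y`, or removed from play if `x + y > n`. -/
def LeftMove (n : ℕ) (P Q : Pos) : Prop :=
  ∃ x ∈ P.1, ∃ y ∈ P.2,
    Q.1 = P.1 ∧
    Q.2 = if x + y ≤ n then (x + y) ::ₘ P.2.erase y else P.2.erase y

/-- A move of Right with finger count `n`: Right chooses an attacking hand `y` in
his multiset and a target hand `x` in Left's multiset; that copy of `x` is
replaced by `x + y`, or removed from play if `x + y > n`. -/
def RightMove (n : ℕ) (P Q : Pos) : Prop :=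
  ∃ x ∈ P.1, ∃ y ∈ P.2,
    Q.2 = P.2 ∧
    Q.1 = if x + y ≤ n then (x + y) ::ₘ P.1.erase x else P.1.erase x

/-- `LeftWinsFirst n P`: Left, moving first from `P`, has a winning strategy
(normal play: a player with no move on their turn loses). -/
inductive LeftWinsFirst (n : ℕ) : Pos → Prop
  | intro (P Q : Pos) (hmove : LeftMove n P Q)
      (hwin : ∀ R, RightMove n Q R → LeftWinsFirst n R) : LeftWinsFirst n P

/-- `RightWinsFirst n P`: Right, moving first from `P`, has a winning strategy. -/
inductive RightWinsFirst (n : ℕ) : Pos → Prop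
  | intro (P Q : Pos) (hmove : RightMove n P Q)
      (hwin : ∀ R, LeftMove n Q R → RightWinsFirst n R) : RightWinsFirst n P

/-- Left, moving second from `P`, has a winning strategy. -/
def LeftWinsSecond (n : ℕ) (P : Pos) : Prop :=
  ∀ Q, RightMove n P Q → LeftWinsFirst n Q

/-- Right, moving second from `P`, has a winning strategy. -/
def RightWinsSecond (n : ℕ) (P : Pos) : Prop :=
  ∀ Q, LeftMove n P Q → RightWinsFirst n Q

/-- `N`-position: whichever player moves first wins. -/
def NPos (n : ℕ) (P : Pos) : Prop := LeftWinsFirst n P ∧ RightWinsFirst n P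

/-- `P`-position: whichever player moves second wins. -/
def PPos (n : ℕ) (P : Pos) : Prop := LeftWinsSecond n P ∧ RightWinsSecond n P

/-- `L`-position: Left wins whoever moves first. -/
def LPos (n : ℕ) (P : Pos) : Prop := LeftWinsFirst n P ∧ LeftWinsSecond n P

/-- `R`-position: Right wins whoever moves first. -/
def RPos (n : ℕ) (P : Pos) : Prop := RightWinsFirst n P ∧ RightWinsSecond n P

/-- The position `[1^a, 2^b | 1^c, 2^d]` (used with finger count 2). -/
def two (a b c d : ℕ) : Pos :=
  (Multiset.replicate a 1 + Multiset.replicate b 2,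
   Multiset.replicate c 1 + Multiset.replicate d 2)

lemma leftAux : ∀ k : ℕ, ∀ Y : Multiset ℕ, (∀ y ∈ Y, 1 ≤ y) → Multiset.card Y = k → 0 < k →
    LeftWinsFirst 2 (Multiset.replicate k 2, Y) := by
  intro k
  induction k with
  | zero => intro Y _ _ hk; omega
  | succ k ih =>
    intro Y hY hcard _
    obtain ⟨y, hy⟩ : ∃ y, y ∈ Y := Multiset.card_pos_iff_exists_mem.mp (by omega)
    refine LeftWinsFirst.intro _ (Multiset.replicate (k+1) 2, Y.erase y)
      ⟨2, ?_, y, hy, rfl, ?_⟩ ?_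
    · simp [Multiset.mem_replicate]
    · have h1 := hY y hy
      have : ¬ (2 + y ≤ 2) := by omega
      simp only [this, if_false]
    · rintro R ⟨x, hx, y', hy', hR2, hR1⟩
      simp only at hx hy' hR1 hR2
      have hx2 : x = 2 := Multiset.eq_of_mem_replicate hx
      have hy'1 : 1 ≤ y' := hY y' (Multiset.mem_of_mem_erase hy')
      have hnle : ¬ (x + y' ≤ 2) := by omega
      rw [if_neg hnle, hx2] at hR1
      have hkpos : 0 < k := by
        rcases Nat.eq_zero_or_pos k with hk0 | hk0
        · exfalso
          have : Multiset.card (Y.erase y) = 0 := by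
            rw [Multiset.card_erase_of_mem hy, hcard]; simp [hk0]
          rw [Multiset.card_eq_zero] at this
          rw [this] at hy'; exact absurd hy' (Multiset.notMem_zero y')
        · exact hk0
      have herase : (Multiset.replicate (k+1) 2).erase 2 = Multiset.replicate k 2 := by
        rw [Multiset.replicate_succ, Multiset.erase_cons_head]
      have hReq : R = (Multiset.replicate k 2, Y.erase y) := by
        apply Prod.ext
        · rw [hR1, herase]
        · exact hR2
      rw [hReq]
      exact ih (Y.erase y) (fun z hz => hY z (Multiset.mem_of_mem_erase hz))
        (by rw [Multiset.card_erase_of_mem hy, hcard]; rfl) hkpos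

lemma rightAux : ∀ k : ℕ, ∀ Y : Multiset ℕ, (∀ y ∈ Y, 1 ≤ y) → Multiset.card Y = k → 0 < k →
    RightWinsFirst 2 (Multiset.replicate k 2, Y) := by
  intro k
  induction k with
  | zero => intro Y _ _ hk; omega
  | succ k ih =>
    intro Y hY hcard _
    obtain ⟨y, hy⟩ : ∃ y, y ∈ Y := Multiset.card_pos_iff_exists_mem.mp (by omega)
    have h1 := hY y hy
    have herase : (Multiset.replicate (k+1) 2).erase 2 = Multiset.replicate k 2 := by
      rw [Multiset.replicate_succ, Multiset.erase_cons_head]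
    refine RightWinsFirst.intro _ (Multiset.replicate k 2, Y)
      ⟨2, ?_, y, hy, rfl, ?_⟩ ?_
    · simp [Multiset.mem_replicate]
    · have : ¬ (2 + y ≤ 2) := by omega
      simp only [this, if_false]
      exact herase.symm
    · rintro R ⟨x, hx, y', hy', hR1, hR2⟩
      simp only at hx hy' hR1 hR2
      have hx2 : x = 2 := Multiset.eq_of_mem_replicate hx
      have hkpos : 0 < k := by
        rcases Multiset.mem_replicate.mp hx with ⟨hne, _⟩
        omega
      have hy'1 : 1 ≤ y' := hY y' hy'
      have hnle : ¬ (x + y' ≤ 2) := by omega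
      rw [if_neg hnle] at hR2
      have hReq : R = (Multiset.replicate k 2, Y.erase y') := by
        apply Prod.ext
        · exact hR1
        · exact hR2
      rw [hReq]
      exact ih (Y.erase y') (fun z hz => hY z (Multiset.mem_of_mem_erase hz))
        (by rw [Multiset.card_erase_of_mem hy', hcard]; rfl) hkpos

/-- for `b = c + d > 0`, the position `[2^b | 1^c, 2^d]` with
finger count 2 is an N-position. -/
theorem fingerTwo_a_zero (b c d : ℕ) (h : b = c + d) (h0 : 0 < b) :
    NPos 2 (two 0 b c d) := by
  have hX : (two 0 b c d).1 = Multiset.replicate b 2 := by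
    simp [two]
  have hY1 : ∀ y ∈ (two 0 b c d).2, 1 ≤ y := by
    intro y hy
    simp only [two, Multiset.mem_add, Multiset.mem_replicate] at hy
    rcases hy with ⟨_, rfl⟩ | ⟨_, rfl⟩ <;> omega
  have hYc : Multiset.card (two 0 b c d).2 = b := by
    simp [two, h]
  have hP : two 0 b c d = (Multiset.replicate b 2, (two 0 b c d).2) := by
    apply Prod.ext
    · exact hX
    · rfl
  constructor
  · rw [hP]; exact leftAux b _ hY1 hYc h0
  · rw [hP]; exact rightAux b _ hY1 hYc h0


end Octopus
end

section
/- Let a, b, c be nonnegative integers with b > 0, a odd, and a + b = c + 1. Then the Octopus position [1^a, 2^b | 1^c] with finger count 2 is an N-position: whichever player moves first has a winning strategy. -/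
namespace Octopus

/-! ### auxiliary lemmas -/


lemma mem_rep (x a b : ℕ) :
    x ∈ (Multiset.replicate a 1 + Multiset.replicate b 2) ↔
      (x = 1 ∧ 1 ≤ a) ∨ (x = 2 ∧ 1 ≤ b) := by
  simp [Multiset.mem_replicate]; omega

lemma erase_one (a b : ℕ) (ha : 1 ≤ a) :
    (Multiset.replicate a 1 + Multiset.replicate b 2).erase 1 =
      Multiset.replicate (a-1) 1 + Multiset.replicate b 2 := by
  obtain ⟨a', rfl⟩ : ∃ a', a = a' + 1 := ⟨a - 1, by omega⟩
  rw [Multiset.replicate_succ, Multiset.cons_add, Multiset.erase_cons_head]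
  simp

lemma erase_two (a b : ℕ) (hb : 1 ≤ b) :
    (Multiset.replicate a 1 + Multiset.replicate b 2).erase 2 =
      Multiset.replicate a 1 + Multiset.replicate (b-1) 2 := by
  obtain ⟨b', rfl⟩ : ∃ b', b = b' + 1 := ⟨b - 1, by omega⟩
  rw [Multiset.replicate_succ, Multiset.add_cons, Multiset.erase_cons_head]
  simp

lemma cons_two (a b : ℕ) :
    (2 : ℕ) ::ₘ (Multiset.replicate a 1 + Multiset.replicate b 2) =
      Multiset.replicate a 1 + Multiset.replicate (b+1) 2 := by
  rw [Multiset.replicate_succ, Multiset.add_cons]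

/-- symmetry of the game -/
lemma rightMove_swap {n : ℕ} {P Q : Pos} (h : RightMove n P Q) :
    LeftMove n (P.2, P.1) (Q.2, Q.1) := by
  obtain ⟨x, hx, y, hy, h2, h1⟩ := h
  exact ⟨y, hy, x, hx, h2, by rw [Nat.add_comm y x]; exact h1⟩

lemma swap_RL {n : ℕ} {P : Pos} (h : RightWinsFirst n P) :
    LeftWinsFirst n (P.2, P.1) := by
  induction h with
  | intro P Q hmove hwin ih =>
    refine LeftWinsFirst.intro _ (Q.2, Q.1) (rightMove_swap hmove) ?_
    intro S hS
    obtain ⟨x, hx, y, hy, h2, h1⟩ := hS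
    have hm : LeftMove n Q (S.2, S.1) :=
      ⟨y, hy, x, hx, h2, by rw [Nat.add_comm y x]; exact h1⟩
    exact ih _ hm

/-- characterization of Left moves from a `two` position -/
lemma leftMoves_two {a b c d : ℕ} {R : Pos} (h : LeftMove 2 (two a b c d) R) :
    (1 ≤ a ∧ 1 ≤ c ∧ R = two a b (c-1) (d+1)) ∨
    (1 ≤ b ∧ 1 ≤ c ∧ R = two a b (c-1) d) ∨
    (1 ≤ a ∧ 1 ≤ d ∧ R = two a b c (d-1)) ∨
    (1 ≤ b ∧ 1 ≤ d ∧ R = two a b c (d-1)) := by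
  obtain ⟨x, hx, y, hy, h1, h2⟩ := h
  rw [show (two a b c d).1 = Multiset.replicate a 1 + Multiset.replicate b 2 from rfl,
    mem_rep] at hx
  rw [show (two a b c d).2 = Multiset.replicate c 1 + Multiset.replicate d 2 from rfl,
    mem_rep] at hy
  rcases hx with ⟨rfl, ha⟩ | ⟨rfl, hb⟩ <;> rcases hy with ⟨rfl, hc⟩ | ⟨rfl, hd⟩
  · refine Or.inl ⟨ha, hc, Prod.ext h1 ?_⟩
    rw [h2]
    norm_num
    rw [show (two a b c d).2 = Multiset.replicate c 1 + Multiset.replicate d 2 from rfl,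
      erase_one c d hc, cons_two]
    rfl
  · refine Or.inr (Or.inr (Or.inl ⟨ha, hd, Prod.ext h1 ?_⟩))
    rw [h2]
    norm_num
    rw [show (two a b c d).2 = Multiset.replicate c 1 + Multiset.replicate d 2 from rfl,
      erase_two c d hd]
    rfl
  · refine Or.inr (Or.inl ⟨hb, hc, Prod.ext h1 ?_⟩)
    rw [h2]
    norm_num
    rw [show (two a b c d).2 = Multiset.replicate c 1 + Multiset.replicate d 2 from rfl,
      erase_one c d hc]
    rfl
  · refine Or.inr (Or.inr (Or.inr ⟨hb, hd, Prod.ext h1 ?_⟩))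
    rw [h2]
    norm_num
    rw [show (two a b c d).2 = Multiset.replicate c 1 + Multiset.replicate d 2 from rfl,
      erase_two c d hd]
    rfl

/-- Right move constructors -/
lemma rm_conv {a c : ℕ} (b d : ℕ) (ha : 1 ≤ a) (hc : 1 ≤ c) :
    RightMove 2 (two a b c d) (two (a-1) (b+1) c d) := by
  refine ⟨1, ?_, 1, ?_, rfl, ?_⟩
  · rw [show (two a b c d).1 = Multiset.replicate a 1 + Multiset.replicate b 2 from rfl,
      mem_rep]; exact Or.inl ⟨rfl, ha⟩
  · rw [show (two a b c d).2 = Multiset.replicate c 1 + Multiset.replicate d 2 from rfl,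
      mem_rep]; exact Or.inl ⟨rfl, hc⟩
  · norm_num
    rw [show (two a b c d).1 = Multiset.replicate a 1 + Multiset.replicate b 2 from rfl,
      erase_one a b ha, cons_two]
    rfl

lemma rm_kill2c {b c : ℕ} (a d : ℕ) (hb : 1 ≤ b) (hc : 1 ≤ c) :
    RightMove 2 (two a b c d) (two a (b-1) c d) := by
  refine ⟨2, ?_, 1, ?_, rfl, ?_⟩
  · rw [show (two a b c d).1 = Multiset.replicate a 1 + Multiset.replicate b 2 from rfl,
      mem_rep]; exact Or.inr ⟨rfl, hb⟩
  · rw [show (two a b c d).2 = Multiset.replicate c 1 + Multiset.replicate d 2 from rfl,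
      mem_rep]; exact Or.inl ⟨rfl, hc⟩
  · norm_num
    rw [show (two a b c d).1 = Multiset.replicate a 1 + Multiset.replicate b 2 from rfl,
      erase_two a b hb]
    rfl

lemma rm_kill2d {b d : ℕ} (a c : ℕ) (hb : 1 ≤ b) (hd : 1 ≤ d) :
    RightMove 2 (two a b c d) (two a (b-1) c d) := by
  refine ⟨2, ?_, 2, ?_, rfl, ?_⟩
  · rw [show (two a b c d).1 = Multiset.replicate a 1 + Multiset.replicate b 2 from rfl,
      mem_rep]; exact Or.inr ⟨rfl, hb⟩
  · rw [show (two a b c d).2 = Multiset.replicate c 1 + Multiset.replicate d 2 from rfl,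
      mem_rep]; exact Or.inr ⟨rfl, hd⟩
  · norm_num
    rw [show (two a b c d).1 = Multiset.replicate a 1 + Multiset.replicate b 2 from rfl,
      erase_two a b hb]
    rfl

lemma rm_kill1 {a d : ℕ} (b c : ℕ) (ha : 1 ≤ a) (hd : 1 ≤ d) :
    RightMove 2 (two a b c d) (two (a-1) b c d) := by
  refine ⟨1, ?_, 2, ?_, rfl, ?_⟩
  · rw [show (two a b c d).1 = Multiset.replicate a 1 + Multiset.replicate b 2 from rfl,
      mem_rep]; exact Or.inl ⟨rfl, ha⟩
  · rw [show (two a b c d).2 = Multiset.replicate c 1 + Multiset.replicate d 2 from rfl,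
      mem_rep]; exact Or.inr ⟨rfl, hd⟩
  · norm_num
    rw [show (two a b c d).1 = Multiset.replicate a 1 + Multiset.replicate b 2 from rfl,
      erase_one a b ha]
    rfl

/-- The arithmetic predicate: Right moving first wins from `two a b c d`. -/
def W (a b c d : ℕ) : Prop :=
  1 ≤ a + b ∧
    (a + b + 1 ≤ c + d ∨
     (a + b ≤ c + d ∧ (1 ≤ b ∨ a ≤ d ∨ (a - d) % 2 = 0)) ∨
     (d = 0 ∧ 1 ≤ b ∧ a % 2 = 1 ∧ c + 1 = a + b))

lemma key : ∀ N a b c d : ℕ, 2*(a+b+c+d)+a+c ≤ N → W a b c d →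
    RightWinsFirst 2 (two a b c d) := by
  intro N
  induction N with
  | zero =>
    intro a b c d hm hW
    exfalso; unfold W at hW; omega
  | succ N ih =>
    intro a b c d hm hW
    have hW' := hW; unfold W at hW'
    -- helper to finish once a target Q = two a' b' c d is chosen,
    -- provided all left replies from Q satisfy W.
    by_cases ha : a = 0
    · -- kill2 : remove a left 2 (b ≥ 1)
      subst ha
      have hb : 1 ≤ b := by omega
      have hcd : 1 ≤ c + d := by omega
      have hmv : RightMove 2 (two 0 b c d) (two 0 (b-1) c d) := by
        rcases Nat.lt_or_ge c 1 with hc | hc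
        · exact rm_kill2d 0 c hb (by omega)
        · exact rm_kill2c 0 d hb hc
      refine RightWinsFirst.intro _ _ hmv ?_
      intro R hR
      rcases leftMoves_two hR with ⟨h1, h2, rfl⟩ | ⟨h1, h2, rfl⟩ | ⟨h1, h2, rfl⟩ | ⟨h1, h2, rfl⟩ <;>
        [skip; skip; skip; skip] <;>
        exact ih _ _ _ _ (by omega) (by unfold W; omega)
    · have ha1 : 1 ≤ a := by omega
      by_cases hd : 1 ≤ d
      · -- kill1
        refine RightWinsFirst.intro _ _ (rm_kill1 b c ha1 hd) ?_
        intro R hR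
        rcases leftMoves_two hR with ⟨h1, h2, rfl⟩ | ⟨h1, h2, rfl⟩ | ⟨h1, h2, rfl⟩ | ⟨h1, h2, rfl⟩ <;>
          exact ih _ _ _ _ (by omega) (by unfold W; omega)
      · -- d = 0
        have hd0 : d = 0 := by omega
        subst hd0
        by_cases hconv : a + b + 1 ≤ c ∨ (c = a + b ∧ a % 2 = 0)
        · -- convert a left 1
          have hc : 1 ≤ c := by omega
          refine RightWinsFirst.intro _ _ (rm_conv b 0 ha1 hc) ?_
          intro R hR
          rcases leftMoves_two hR with ⟨h1, h2, rfl⟩ | ⟨h1, h2, rfl⟩ | ⟨h1, h2, rfl⟩ | ⟨h1, h2, rfl⟩ <;>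
            exact ih _ _ _ _ (by omega) (by unfold W; omega)
        · -- kill2 with y = 1
          have hb : 1 ≤ b := by omega
          have hc : 1 ≤ c := by omega
          refine RightWinsFirst.intro _ _ (rm_kill2c a 0 hb hc) ?_
          intro R hR
          rcases leftMoves_two hR with ⟨h1, h2, rfl⟩ | ⟨h1, h2, rfl⟩ | ⟨h1, h2, rfl⟩ | ⟨h1, h2, rfl⟩ <;>
            exact ih _ _ _ _ (by omega) (by unfold W; omega)


/-- for `b > 0`, `a` odd and `a + b = c + 1`, the position
`[1^a, 2^b | 1^c]` with finger count 2 is an N-position. -/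
theorem fingerTwo_N_oneMoreHand (a b c : ℕ) (hb : 0 < b) (ha : Odd a)
    (h : a + b = c + 1) :
    NPos 2 (two a b c 0) := by
  have hodd : a % 2 = 1 := Nat.odd_iff.mp ha
  constructor
  · have hr : RightWinsFirst 2 (two c 0 a b) := by
      refine key (2*(a+b+c)+a+c) c 0 a b (by omega) ?_
      unfold W
      omega
    exact swap_RL hr
  · refine key (2*(a+b+c)+a+c) a b c 0 (by omega) ?_
    unfold W
    omega

end Octopus
end

section
/- Consider the Octopus position [1 | 1]_n with finger count n, with Left moving first. In any position where each player has exactly one hand, each player has exactly one option, so play from [1 | 1]_n is forced. For every positive integer i such that f_{2i+1} ≤ n, the position reached after Left's i-th move (i.e., after 2i-1 total moves of forced play) is [f_{2i} | f_{2i+1}]_n, and if moreover f_{2i+2} ≤ n, the position reached after Right's i-th move (after 2i total moves) is [f_{2i+2} | f_{2i+1}]_n. -/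
namespace Octopus

lemma leftMove_det {n a b : ℕ} {Q : Pos} (h : LeftMove n (({a}, {b}) : Pos) Q)
    (hle : a + b ≤ n) : Q = ({a}, {a + b}) := by
  obtain ⟨x, hx, y, hy, h1, h2⟩ := h
  simp only [Multiset.mem_singleton] at hx hy
  subst hx; subst hy
  rw [if_pos hle] at h2
  refine Prod.ext ?_ ?_
  · simpa using h1
  · simpa using h2

lemma rightMove_det {n a b : ℕ} {Q : Pos} (h : RightMove n (({a}, {b}) : Pos) Q)
    (hle : a + b ≤ n) : Q = ({a + b}, {b}) := by
  obtain ⟨x, hx, y, hy, h2, h1⟩ := h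
  simp only [Multiset.mem_singleton] at hx hy
  subst hx; subst hy
  rw [if_pos hle] at h1
  refine Prod.ext ?_ ?_
  · simpa using h1
  · simpa using h2

lemma forced (n m : ℕ) (hm : Nat.fib (m + 2) ≤ n)
    (g : ℕ → Pos) (h0 : g 0 = ({1}, {1}))
    (hstep : ∀ k < m, (Even k → LeftMove n (g k) (g (k + 1))) ∧
        (¬ Even k → RightMove n (g k) (g (k + 1)))) :
    ∀ k ≤ m, g k = if Even k then ({Nat.fib (k + 2)}, {Nat.fib (k + 1)})
      else ({Nat.fib (k + 1)}, {Nat.fib (k + 2)}) := by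
  intro k
  induction k with
  | zero => intro _; simpa using h0
  | succ k ih =>
    intro hk
    have hk' : k < m := hk
    have ihk := ih (le_of_lt hk')
    have hfib3 : Nat.fib (k + 1) + Nat.fib (k + 2) = Nat.fib (k + 3) :=
      (Nat.fib_add_two (n := k + 1)).symm
    have hsum : Nat.fib (k + 3) ≤ n :=
      le_trans (Nat.fib_mono (by omega)) hm
    by_cases he : Even k
    · have hmove := (hstep k hk').1 he
      rw [ihk, if_pos he] at hmove
      have := leftMove_det hmove (by omega)
      rw [this, if_neg (by simp [Nat.even_add_one, he])]
      have : Nat.fib (k + 2) + Nat.fib (k + 1) = Nat.fib (k + 1 + 2) := by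
        rw [Nat.add_comm]; exact hfib3
      rw [this]
    · have hmove := (hstep k hk').2 he
      rw [ihk, if_neg he] at hmove
      have := rightMove_det hmove (by omega)
      rw [this, if_pos (by simp [Nat.even_add_one, he])]
      rw [show k + 1 + 2 = k + 3 from rfl, ← hfib3]

/-- in one-hand-versus-one-hand positions each player has exactly
one option, so play from `[1 | 1]_n` is forced; after Left's `i`-th move
(`2i - 1` total moves) the position is `[fib (2i) | fib (2i+1)]_n` provided
`fib (2i+1) ≤ n`, and after Right's `i`-th move (`2i` total moves) it is
`[fib (2i+2) | fib (2i+1)]_n` provided moreover `fib (2i+2) ≤ n`. -/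
theorem one_hand_forced_play (n : ℕ) (hn : 0 < n) :
    (∀ P : Pos, Multiset.card P.1 = 1 → Multiset.card P.2 = 1 →
      (∃! Q, LeftMove n P Q) ∧ (∃! Q, RightMove n P Q)) ∧
    (∀ i : ℕ, 0 < i → Nat.fib (2 * i + 1) ≤ n →
      ∀ g : ℕ → Pos, g 0 = ({1}, {1}) →
        (∀ k < 2 * i - 1,
          (Even k → LeftMove n (g k) (g (k + 1))) ∧
          (¬ Even k → RightMove n (g k) (g (k + 1)))) →
        g (2 * i - 1) = ({Nat.fib (2 * i)}, {Nat.fib (2 * i + 1)})) ∧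
    (∀ i : ℕ, 0 < i → Nat.fib (2 * i + 1) ≤ n → Nat.fib (2 * i + 2) ≤ n →
      ∀ g : ℕ → Pos, g 0 = ({1}, {1}) →
        (∀ k < 2 * i,
          (Even k → LeftMove n (g k) (g (k + 1))) ∧
          (¬ Even k → RightMove n (g k) (g (k + 1)))) →
        g (2 * i) = ({Nat.fib (2 * i + 2)}, {Nat.fib (2 * i + 1)})) := by
  refine ⟨?_, ?_, ?_⟩
  · intro P h1 h2
    obtain ⟨x, hx⟩ := Multiset.card_eq_one.mp h1
    obtain ⟨y, hy⟩ := Multiset.card_eq_one.mp h2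
    constructor
    · refine ⟨(P.1, if x + y ≤ n then (x + y) ::ₘ P.2.erase y else P.2.erase y),
        ⟨x, by rw [hx]; exact Multiset.mem_singleton_self x,
         y, by rw [hy]; exact Multiset.mem_singleton_self y, rfl, rfl⟩, ?_⟩
      rintro Q ⟨x', hx', y', hy', hQ1, hQ2⟩
      rw [hx, Multiset.mem_singleton] at hx'
      rw [hy, Multiset.mem_singleton] at hy'
      subst hx'; subst hy'
      exact Prod.ext hQ1 hQ2
    · refine ⟨(if x + y ≤ n then (x + y) ::ₘ P.1.erase x else P.1.erase x, P.2),
        ⟨x, by rw [hx]; exact Multiset.mem_singleton_self x,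
         y, by rw [hy]; exact Multiset.mem_singleton_self y, rfl, rfl⟩, ?_⟩
      rintro Q ⟨x', hx', y', hy', hQ2, hQ1⟩
      rw [hx, Multiset.mem_singleton] at hx'
      rw [hy, Multiset.mem_singleton] at hy'
      subst hx'; subst hy'
      exact Prod.ext hQ1 hQ2
  · intro i hi hfib g h0 hstep
    have hm : Nat.fib (2 * i - 1 + 2) ≤ n := by
      rw [show 2 * i - 1 + 2 = 2 * i + 1 by omega]; exact hfib
    have := forced n (2 * i - 1) hm g h0 hstep (2 * i - 1) le_rfl
    rw [if_neg (by rw [Nat.even_iff]; omega)] at this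
    rw [this, show 2 * i - 1 + 1 = 2 * i by omega,
      show 2 * i - 1 + 2 = 2 * i + 1 by omega]
  · intro i hi hfib hfib' g h0 hstep
    have := forced n (2 * i) hfib' g h0 hstep (2 * i) le_rfl
    rw [if_pos ⟨i, by omega⟩] at this
    rw [this]

end Octopus
end

section
/- Let l, r and n be positive integers with l ≥ r + 2, and let P = [x_1,...,x_l | y_1,...,y_r]_n be an Octopus position. Then P is an L-position: Left has a winning strategy regardless of which player moves first. -/
namespace Octopus

def phi (n : ℕ) (P : Pos) : ℕ :=
  (P.1.map (fun x => n + 1 - x)).sum + (P.2.map (fun y => n + 1 - y)).sum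

lemma sum_map_mem {f : ℕ → ℕ} {s : Multiset ℕ} {a : ℕ} (h : a ∈ s) :
    (s.map f).sum = f a + ((s.erase a).map f).sum := by
  conv_lhs => rw [← Multiset.cons_erase h]
  simp

lemma valid_left {n : ℕ} {P Q : Pos} (hV : Valid n P) (hm : LeftMove n P Q) :
    Valid n Q := by
  obtain ⟨x, hx, y, hy, h1, h2⟩ := hm
  refine ⟨by rw [h1]; exact hV.1, ?_⟩
  by_cases hxy : x + y ≤ n
  · rw [if_pos hxy] at h2
    rw [h2]; intro z hz
    rcases Multiset.mem_cons.mp hz with hz | hz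
    · subst hz; exact ⟨by have := (hV.1 x hx).1; omega, hxy⟩
    · exact hV.2 z (Multiset.mem_of_mem_erase hz)
  · rw [if_neg hxy] at h2
    rw [h2]; intro z hz
    exact hV.2 z (Multiset.mem_of_mem_erase hz)

lemma valid_right {n : ℕ} {P Q : Pos} (hV : Valid n P) (hm : RightMove n P Q) :
    Valid n Q := by
  obtain ⟨x, hx, y, hy, h2, h1⟩ := hm
  refine ⟨?_, by rw [h2]; exact hV.2⟩
  by_cases hxy : x + y ≤ n
  · rw [if_pos hxy] at h1
    rw [h1]; intro z hz
    rcases Multiset.mem_cons.mp hz with hz | hz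
    · subst hz; exact ⟨by have := (hV.1 x hx).1; omega, hxy⟩
    · exact hV.1 z (Multiset.mem_of_mem_erase hz)
  · rw [if_neg hxy] at h1
    rw [h1]; intro z hz
    exact hV.1 z (Multiset.mem_of_mem_erase hz)

lemma phi_left {n : ℕ} {P Q : Pos} (hV : Valid n P) (hm : LeftMove n P Q) :
    phi n Q < phi n P := by
  obtain ⟨x, hx, y, hy, h1, h2⟩ := hm
  have hx1 := (hV.1 x hx).1
  have hyn := (hV.2 y hy).2
  unfold phi
  rw [h1]
  apply Nat.add_lt_add_left
  rw [sum_map_mem hy]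
  by_cases hxy : x + y ≤ n
  · rw [if_pos hxy] at h2
    rw [h2, Multiset.map_cons, Multiset.sum_cons]
    have : n + 1 - (x + y) < n + 1 - y := by omega
    omega
  · rw [if_neg hxy] at h2
    rw [h2]
    have : 1 ≤ n + 1 - y := by omega
    omega

lemma phi_right {n : ℕ} {P Q : Pos} (hV : Valid n P) (hm : RightMove n P Q) :
    phi n Q < phi n P := by
  obtain ⟨x, hx, y, hy, h2, h1⟩ := hm
  have hy1 := (hV.2 y hy).1
  have hxn := (hV.1 x hx).2
  unfold phi
  rw [h2]
  apply Nat.add_lt_add_right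
  rw [sum_map_mem hx]
  by_cases hxy : x + y ≤ n
  · rw [if_pos hxy] at h1
    rw [h1, Multiset.map_cons, Multiset.sum_cons]
    have : n + 1 - (x + y) < n + 1 - x := by omega
    omega
  · rw [if_neg hxy] at h1
    rw [h1]
    have : 1 ≤ n + 1 - x := by omega
    omega


theorem main (n : ℕ) : ∀ (k : ℕ) (P : Pos), Valid n P → phi n P ≤ k →
    Multiset.card P.2 + 1 ≤ Multiset.card P.1 → P.2 ≠ 0 → LeftWinsFirst n P := by
  intro k
  induction k using Nat.strong_induction_on with
  | _ k IH =>
  intro P hV hphi hcard hY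
  have hcY : 0 < Multiset.card P.2 := Multiset.card_pos.mpr hY
  have hposX : 0 < Multiset.card P.1 := by omega
  by_cases hkill : ∃ x ∈ P.1, ∃ y ∈ P.2, n < x + y
  · -- Left can kill a Right hand
    obtain ⟨x, hx, y, hy, hxy⟩ := hkill
    have hmQ : LeftMove n P (P.1, P.2.erase y) :=
      ⟨x, hx, y, hy, rfl, by rw [if_neg (by omega)]⟩
    refine LeftWinsFirst.intro P (P.1, P.2.erase y) hmQ ?_
    intro R hR
    have hVQ := valid_left hV hmQ
    have hVR := valid_right hVQ hR
    have hphiR : phi n R < k :=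
      lt_of_lt_of_le (lt_trans (phi_right hVQ hR) (phi_left hV hmQ)) hphi
    obtain ⟨x', hx', y', hy', hR2, hR1⟩ := hR
    have hx'P : x' ∈ P.1 := hx'
    have hy'Q : y' ∈ P.2.erase y := hy'
    have hR2' : R.2 = P.2.erase y := hR2
    have hR1' : R.1 = if x' + y' ≤ n then (x' + y') ::ₘ P.1.erase x' else P.1.erase x' := hR1
    have hy'R : y' ∈ R.2 := hR2' ▸ hy'Q
    have hRY : R.2 ≠ 0 := fun h => by simp [h] at hy'R
    have hce : Multiset.card (P.1.erase x') = Multiset.card P.1 - 1 := by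
      simpa using Multiset.card_erase_of_mem hx'P
    have hceY : Multiset.card (P.2.erase y) = Multiset.card P.2 - 1 := by
      simpa using Multiset.card_erase_of_mem hy
    have hcR1 : Multiset.card P.1 - 1 ≤ Multiset.card R.1 := by
      by_cases hg : x' + y' ≤ n
      · rw [if_pos hg] at hR1'
        rw [hR1', Multiset.card_cons, hce]
        omega
      · rw [if_neg hg] at hR1'
        rw [hR1', hce]
    have hcR2 : Multiset.card R.2 = Multiset.card P.2 - 1 := by rw [hR2', hceY]
    exact IH _ hphiR R hVR le_rfl (by omega) hRY
  · push_neg at hkill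
    by_cases hsafe : ∃ x ∈ P.1, ∃ y ∈ P.2, ∀ x' ∈ P.1, x' + (x + y) ≤ n
    · -- safe grow: Right cannot kill afterwards
      obtain ⟨x, hx, y, hy, hall⟩ := hsafe
      have hmQ : LeftMove n P (P.1, (x + y) ::ₘ P.2.erase y) :=
        ⟨x, hx, y, hy, rfl, by rw [if_pos (hkill x hx y hy)]⟩
      refine LeftWinsFirst.intro P (P.1, (x + y) ::ₘ P.2.erase y) hmQ ?_
      intro R hR
      have hVQ := valid_left hV hmQ
      have hVR := valid_right hVQ hR
      have hphiR : phi n R < k :=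
        lt_of_lt_of_le (lt_trans (phi_right hVQ hR) (phi_left hV hmQ)) hphi
      obtain ⟨x', hx', y', hy', hR2, hR1⟩ := hR
      have hx'P : x' ∈ P.1 := hx'
      have hy'Q : y' ∈ (x + y) ::ₘ P.2.erase y := hy'
      have hR2' : R.2 = (x + y) ::ₘ P.2.erase y := hR2
      have hg : x' + y' ≤ n := by
        rcases Multiset.mem_cons.mp hy'Q with h | h
        · subst h; exact hall x' hx'P
        · exact hkill x' hx'P y' (Multiset.mem_of_mem_erase h)
      have hR1' : R.1 = (x' + y') ::ₘ P.1.erase x' := by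
        have : R.1 = if x' + y' ≤ n then (x' + y') ::ₘ P.1.erase x' else P.1.erase x' := hR1
        rwa [if_pos hg] at this
      have hy'R : y' ∈ R.2 := hR2' ▸ hy'Q
      have hRY : R.2 ≠ 0 := fun h => by simp [h] at hy'R
      have hce : Multiset.card (P.1.erase x') = Multiset.card P.1 - 1 := by
        simpa using Multiset.card_erase_of_mem hx'P
      have hceY : Multiset.card (P.2.erase y) = Multiset.card P.2 - 1 := by
        simpa using Multiset.card_erase_of_mem hy
      have hcR1 : Multiset.card R.1 = Multiset.card P.1 := by
        rw [hR1', Multiset.card_cons, hce]; omega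
      have hcR2 : Multiset.card R.2 = Multiset.card P.2 := by
        rw [hR2', Multiset.card_cons, hceY]; omega
      exact IH _ hphiR R hVR le_rfl (by omega) hRY
    · -- hard case: grow max onto max; every Left hand can retaliate
      push_neg at hsafe
      obtain ⟨x0, hx0⟩ := Multiset.exists_mem_of_ne_zero
        (show P.1 ≠ 0 from fun h => by rw [h] at hposX; simp at hposX)
      obtain ⟨y0, hy0⟩ := Multiset.exists_mem_of_ne_zero hY
      have hFXne : P.1.toFinset.Nonempty := ⟨x0, Multiset.mem_toFinset.mpr hx0⟩
      have hFYne : P.2.toFinset.Nonempty := ⟨y0, Multiset.mem_toFinset.mpr hy0⟩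
      obtain ⟨xM, hxMf, hubXf⟩ : ∃ a ∈ P.1.toFinset, ∀ b ∈ P.1.toFinset, b ≤ a :=
        ⟨P.1.toFinset.max' hFXne, P.1.toFinset.max'_mem hFXne,
          fun b hb => P.1.toFinset.le_max' b hb⟩
      obtain ⟨yM, hyMf, hubYf⟩ : ∃ a ∈ P.2.toFinset, ∀ b ∈ P.2.toFinset, b ≤ a :=
        ⟨P.2.toFinset.max' hFYne, P.2.toFinset.max'_mem hFYne,
          fun b hb => P.2.toFinset.le_max' b hb⟩
      obtain ⟨xm, hxmf, hlbXf⟩ : ∃ a ∈ P.1.toFinset, ∀ b ∈ P.1.toFinset, a ≤ b :=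
        ⟨P.1.toFinset.min' hFXne, P.1.toFinset.min'_mem hFXne,
          fun b hb => P.1.toFinset.min'_le b hb⟩
      obtain ⟨ym, hymf, hlbYf⟩ : ∃ a ∈ P.2.toFinset, ∀ b ∈ P.2.toFinset, a ≤ b :=
        ⟨P.2.toFinset.min' hFYne, P.2.toFinset.min'_mem hFYne,
          fun b hb => P.2.toFinset.min'_le b hb⟩
      have hxM : xM ∈ P.1 := Multiset.mem_toFinset.mp hxMf
      have hyM : yM ∈ P.2 := Multiset.mem_toFinset.mp hyMf
      have hxm : xm ∈ P.1 := Multiset.mem_toFinset.mp hxmf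
      have hym : ym ∈ P.2 := Multiset.mem_toFinset.mp hymf
      obtain ⟨x', hx', hgt⟩ := hsafe xm hxm ym hym
      have key : ∀ x ∈ P.1, n < x + (xM + yM) := by
        intro x hxmem
        have h1 : x' ≤ xM := hubXf x' (Multiset.mem_toFinset.mpr hx')
        have h2 : xm ≤ x := hlbXf x (Multiset.mem_toFinset.mpr hxmem)
        have h3 : ym ≤ yM := hubYf ym hymf
        omega
      have hgrow : xM + yM ≤ n := hkill xM hxM yM hyM
      have hmQ : LeftMove n P (P.1, (xM + yM) ::ₘ P.2.erase yM) :=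
        ⟨xM, hxM, yM, hyM, rfl, by rw [if_pos hgrow]⟩
      refine LeftWinsFirst.intro P (P.1, (xM + yM) ::ₘ P.2.erase yM) hmQ ?_
      intro R hR
      have hVQ := valid_left hV hmQ
      have hVR := valid_right hVQ hR
      have hphiRk : phi n R < k :=
        lt_of_lt_of_le (lt_trans (phi_right hVQ hR) (phi_left hV hmQ)) hphi
      have hphiRP : phi n R < phi n P := lt_trans (phi_right hVQ hR) (phi_left hV hmQ)
      obtain ⟨xa, hxa, ya, hya, hR2, hR1⟩ := hR
      have hxaP : xa ∈ P.1 := hxa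
      have hyaQ : ya ∈ (xM + yM) ::ₘ P.2.erase yM := hya
      have hR2' : R.2 = (xM + yM) ::ₘ P.2.erase yM := hR2
      have hR1' : R.1 = if xa + ya ≤ n then (xa + ya) ::ₘ P.1.erase xa else P.1.erase xa := hR1
      have hceXa : Multiset.card (P.1.erase xa) = Multiset.card P.1 - 1 := by
        simpa using Multiset.card_erase_of_mem hxaP
      have hceYM : Multiset.card (P.2.erase yM) = Multiset.card P.2 - 1 := by
        simpa using Multiset.card_erase_of_mem hyM
      by_cases hg : xa + ya ≤ n
      · -- Right grows: invariant preserved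
        rw [if_pos hg] at hR1'
        have hyaR : ya ∈ R.2 := hR2' ▸ hyaQ
        have hRY : R.2 ≠ 0 := fun h => by simp [h] at hyaR
        have hcR1 : Multiset.card R.1 = Multiset.card P.1 := by
          rw [hR1', Multiset.card_cons, hceXa]; omega
        have hcR2 : Multiset.card R.2 = Multiset.card P.2 := by
          rw [hR2', Multiset.card_cons, hceYM]; omega
        exact IH _ hphiRk R hVR le_rfl (by omega) hRY
      · -- Right kills a Left hand; Left retaliates by killing the grown hand
        rw [if_neg hg] at hR1'
        have hcR1 : Multiset.card R.1 = Multiset.card P.1 - 1 := by rw [hR1', hceXa]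
        have hR1ne : R.1 ≠ 0 := by
          intro h0
          rw [h0] at hcR1
          simp at hcR1
          omega
        obtain ⟨x1, hx1⟩ := Multiset.exists_mem_of_ne_zero hR1ne
        have hx1P : x1 ∈ P.1 := Multiset.mem_of_mem_erase (hR1' ▸ hx1)
        have hyg : (xM + yM) ∈ R.2 := by
          rw [hR2']; exact Multiset.mem_cons_self _ _
        have hkill1 : ¬ (x1 + (xM + yM) ≤ n) := by
          have := key x1 hx1P; omega
        have hmQ2 : LeftMove n R (R.1, R.2.erase (xM + yM)) :=
          ⟨x1, hx1, xM + yM, hyg, rfl, by rw [if_neg hkill1]⟩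
        have hQ22 : R.2.erase (xM + yM) = P.2.erase yM := by
          rw [hR2']; exact Multiset.erase_cons_head _ _
        refine LeftWinsFirst.intro R (R.1, R.2.erase (xM + yM)) hmQ2 ?_
        intro R2 hR2'
        have hVQ2 := valid_left hVR hmQ2
        have hVR2 := valid_right hVQ2 hR2'
        have hphiR2 : phi n R2 < k :=
          lt_of_lt_of_le (lt_trans (lt_trans (phi_right hVQ2 hR2')
            (phi_left hVR hmQ2)) hphiRP) hphi
        obtain ⟨x2, hx2, y2, hy2, hS2, hS1⟩ := hR2'
        have hx2R : x2 ∈ R.1 := hx2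
        have hy2Q2 : y2 ∈ R.2.erase (xM + yM) := hy2
        have hS2' : R2.2 = R.2.erase (xM + yM) := hS2
        have hx2P : x2 ∈ P.1 := Multiset.mem_of_mem_erase (hR1' ▸ hx2R)
        have hy2P : y2 ∈ P.2 := Multiset.mem_of_mem_erase (hQ22 ▸ hy2Q2)
        have hg2 : x2 + y2 ≤ n := hkill x2 hx2P y2 hy2P
        have hS1' : R2.1 = (x2 + y2) ::ₘ R.1.erase x2 := by
          have : R2.1 = if x2 + y2 ≤ n then (x2 + y2) ::ₘ R.1.erase x2 else R.1.erase x2 := hS1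
          rwa [if_pos hg2] at this
        have hy2R : y2 ∈ R2.2 := hS2' ▸ hy2Q2
        have hR2Y : R2.2 ≠ 0 := fun h => by simp [h] at hy2R
        have hceR : Multiset.card (R.1.erase x2) = Multiset.card R.1 - 1 := by
          simpa using Multiset.card_erase_of_mem hx2R
        have hcS1 : Multiset.card R2.1 = Multiset.card P.1 - 1 := by
          rw [hS1', Multiset.card_cons, hceR, hcR1]
          omega
        have hcS2 : Multiset.card R2.2 = Multiset.card P.2 - 1 := by
          rw [hS2', hQ22, hceYM]
        exact IH _ hphiR2 R2 hVR2 le_rfl (by omega) hR2Y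


/-- a position where Left has at least two more hands than Right
is an L-position. -/
theorem twoMoreHands_LPos (n : ℕ) (hn : 0 < n) (P : Pos) (hP : Valid n P)
    (hr : 0 < Multiset.card P.2)
    (h : Multiset.card P.2 + 2 ≤ Multiset.card P.1) :
    LPos n P := by
  have hY : P.2 ≠ 0 := fun h0 => by rw [h0] at hr; simp at hr
  constructor
  · exact main n (phi n P) P hP le_rfl (by omega) hY
  · intro Q hQ
    have hVQ := valid_right hP hQ
    obtain ⟨x, hx, y, hy, h2, h1⟩ := hQ
    have hQ2 : Q.2 = P.2 := h2
    have hce : Multiset.card (P.1.erase x) = Multiset.card P.1 - 1 := by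
      simpa using Multiset.card_erase_of_mem hx
    have hcQ1 : Multiset.card P.1 - 1 ≤ Multiset.card Q.1 := by
      by_cases hg : x + y ≤ n
      · rw [if_pos hg] at h1
        rw [h1, Multiset.card_cons, hce]
        omega
      · rw [if_neg hg] at h1
        rw [h1, hce]
    have hQY : Q.2 ≠ 0 := by rw [hQ2]; exact hY
    refine main n (phi n Q) Q hVQ le_rfl ?_ hQY
    rw [hQ2]
    omega

end Octopus
end
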